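/- arXiv:2601.14088 — 3 statements merged into one kernel-verified Lean document; each statement's English description precedes it below -/
import Mathlib

section
/- There exist absolute constants K₁, K₂ > 0 such that for all natural numbers n, t, t_e with n ≥ 4, t + t_e ≥ 1, and K₁·(t+t_e)·log₂(n)·log₂(log₂ n) ≤ n, there exists a t-breaks t_e-edit-errors resilient code C ⊆ {0,1}^n with log₂|C| ≥ n − K₂·(t+t_e)·log₂(n)·log₂(log₂ n); i.e., there exists such a code of redundancy O((t+t_e)·log n·log log n). -/
/-!
If two words `c, c'` of length `n` share a channel output, then `c'` is determined by `c` and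
`O(t + te)` numbers below `n + te + 2`: the positions of the `te` edits leading from `c` to one
ordering of the fragments, the start and length of each fragment inside it, and the positions of
the `te` edits leading from the other ordering to `c'`. So every word is confusable with at most
`n ^ O(t + te)` others, and a greedy choice of pairwise non-confusable words keeps a
`n ^ (-O(t + te))` fraction of all `2 ^ n` words: redundancy `O((t + te) log n)`.
-/

/-- Mathlib's former `Levenshtein.Cost` (removed from Mathlib), restored verbatim. -/
structure Levenshtein.Cost (α β δ : Type*) where
  delete : α → δ
  insert : β → δ
  substitute : α → β → δ

/-- Mathlib's former `Levenshtein.defaultCost`. -/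
def Levenshtein.defaultCost {α : Type*} [DecidableEq α] : Levenshtein.Cost α α ℕ where
  delete _ := 1
  insert _ := 1
  substitute a b := if a = b then 0 else 1

/-- Mathlib's former `Levenshtein.impl`. -/
def Levenshtein.impl {α β δ : Type*} [AddZeroClass δ] [Min δ] (C : Levenshtein.Cost α β δ)
    (xs : List α) (y : β) (d : {r : List δ // 0 < r.length}) : {r : List δ // 0 < r.length} :=
  let ⟨ds, w⟩ := d
  xs.zip (ds.zip ds.tail) |>.foldr
    (init := ⟨[ds.getLast (List.ne_nil_of_length_pos w) + C.insert y], by simp⟩)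
    (fun ⟨x, d₀, d₁⟩ ⟨r, w⟩ =>
      ⟨min (C.delete x + r[0]) (min (C.insert y + d₀) (C.substitute x y + d₁)) :: r, by simp⟩)

/-- Mathlib's former `suffixLevenshtein`. -/
def suffixLevenshtein {α β δ : Type*} [AddZeroClass δ] [Min δ] (C : Levenshtein.Cost α β δ)
    (xs : List α) (ys : List β) : {r : List δ // 0 < r.length} :=
  ys.foldr
    (Levenshtein.impl C xs)
    (xs.foldr (init := ⟨[0], by simp⟩) (fun a ⟨r, w⟩ => ⟨(C.delete a + r[0]) :: r, by simp⟩))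

/-- Mathlib's former `levenshtein`. -/
def levenshtein {α β δ : Type*} [AddZeroClass δ] [Min δ] (C : Levenshtein.Cost α β δ)
    (xs : List α) (ys : List β) : δ :=
  let ⟨r, w⟩ := suffixLevenshtein C xs ys
  r[0]

/-- The edit (Levenshtein) distance between two binary words. -/
def editDist (x y : List Bool) : ℕ :=
  levenshtein Levenshtein.defaultCost x y

/-- The `t`-breaks `te`-edit-errors channel output set of a binary word `w`:
multisets of `t+1` nonempty binary words, some ordering of which concatenates
to a word within edit distance `te` of `w`. -/
def BreakEdit (t te : ℕ) (w : List Bool) : Set (Multiset (List Bool)) :=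
  { S | Multiset.card S = t + 1 ∧ (∀ f ∈ S, f ≠ []) ∧
      ∃ l : List (List Bool), (l : Multiset (List Bool)) = S ∧ editDist l.flatten w ≤ te }

/-- A code is `t`-breaks `te`-edit-errors resilient if the channel output sets of
distinct codewords are disjoint. -/
def ResilientBE (t te : ℕ) (C : Finset (List Bool)) : Prop :=
  ∀ c ∈ C, ∀ c' ∈ C, c ≠ c' → BreakEdit t te c ∩ BreakEdit t te c' = ∅

section Levenshtein

theorem Levenshtein.eq_of_getElem_zero_eq_of_tail_eq {δ : Type*}
    {x y : {r : List δ // 0 < r.length}} (h₀ : x.1[0]'x.2 = y.1[0]'y.2)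
    (h : x.1.tail = y.1.tail) : x = y := by
  match x, y with
  | ⟨_ :: _, _⟩, ⟨_ :: _, _⟩ => simp_all

variable {α β δ : Type*} [AddZeroClass δ] [Min δ] {C : Levenshtein.Cost α β δ}

theorem Levenshtein.impl_cons {x : α} {xs : List α} {y : β} {d : δ} {ds : List δ}
    {w : 0 < (d :: ds).length} (w' : 0 < ds.length) :
    Levenshtein.impl C (x :: xs) y ⟨d :: ds, w⟩ =
      let ⟨r, w⟩ := Levenshtein.impl C xs y ⟨ds, w'⟩
      ⟨min (C.delete x + r[0]) (min (C.insert y + d) (C.substitute x y + ds[0])) :: r,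
        by simp⟩ :=
  match ds, w' with | _ :: _, _ => rfl

theorem Levenshtein.impl_cons_fst_zero {x : α} {xs : List α} {y : β} {d : δ} {ds : List δ}
    {w : 0 < (d :: ds).length} (h) (w' : 0 < ds.length) :
    (Levenshtein.impl C (x :: xs) y ⟨d :: ds, w⟩).1[0]'h =
      let ⟨r, w⟩ := Levenshtein.impl C xs y ⟨ds, w'⟩
      min (C.delete x + r[0]) (min (C.insert y + d) (C.substitute x y + ds[0])) :=
  match ds, w' with | _ :: _, _ => rfl

theorem Levenshtein.impl_length {xs : List α} {y : β} (d : {r : List δ // 0 < r.length})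
    (w : d.1.length = xs.length + 1) :
    (Levenshtein.impl C xs y d).1.length = xs.length + 1 := by
  induction xs generalizing d with
  | nil => rfl
  | cons x xs ih =>
    match d, w with
    | ⟨d₁ :: d₂ :: ds, _⟩, w =>
      dsimp [Levenshtein.impl]
      congr 1
      exact ih ⟨d₂ :: ds, by simp⟩ (by simpa using w)

theorem suffixLevenshtein_length (xs : List α) (ys : List β) :
    (suffixLevenshtein C xs ys).1.length = xs.length + 1 := by
  induction ys with
  | nil =>
    induction xs with
    | nil => rfl
    | cons _ xs ih => simp_all [suffixLevenshtein]
  | cons y ys ih => exact Levenshtein.impl_length _ ih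

theorem suffixLevenshtein_cons₁ (x : α) (xs : List α) (ys : List β) :
    suffixLevenshtein C (x :: xs) ys =
      ⟨levenshtein C (x :: xs) ys :: (suffixLevenshtein C xs ys).1, by simp⟩ := by
  induction ys with
  | nil => rfl
  | cons y ys ih =>
    apply Levenshtein.eq_of_getElem_zero_eq_of_tail_eq
    · rfl
    · change (Levenshtein.impl C (x :: xs) y (suffixLevenshtein C (x :: xs) ys)).1.tail = _
      rw [ih, Levenshtein.impl_cons (by simp [suffixLevenshtein_length])]
      rfl

theorem levenshtein_nil_cons (y : β) (ys : List β) :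
    levenshtein C [] (y :: ys) = levenshtein C [] ys + C.insert y := by
  have h := suffixLevenshtein_length (C := C) [] ys
  change (Levenshtein.impl C [] y (suffixLevenshtein C [] ys)).1[0]'(by simp [Levenshtein.impl]) =
    (suffixLevenshtein C [] ys).1[0]'(suffixLevenshtein C [] ys).2 + C.insert y
  generalize suffixLevenshtein C [] ys = d at h ⊢
  obtain ⟨ds, w⟩ := d
  match ds, w, h with
  | [_], _, _ => rfl

theorem levenshtein_cons_nil (x : α) (xs : List α) :
    levenshtein C (x :: xs) [] = C.delete x + levenshtein C xs [] :=
  rfl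

theorem levenshtein_cons_cons (x : α) (xs : List α) (y : β) (ys : List β) :
    levenshtein C (x :: xs) (y :: ys) =
      min (C.delete x + levenshtein C xs (y :: ys))
        (min (C.insert y + levenshtein C (x :: xs) ys)
          (C.substitute x y + levenshtein C xs ys)) := by
  change (Levenshtein.impl C (x :: xs) y (suffixLevenshtein C (x :: xs) ys)).1[0]'(by
    simp [suffixLevenshtein_length, Levenshtein.impl_length]) = _
  simp only [suffixLevenshtein_cons₁]
  rw [Levenshtein.impl_cons_fst_zero _ (by simp [suffixLevenshtein_length])]
  rfl

end Levenshtein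

theorem editDist_nil_left (y : List Bool) : editDist [] y = y.length := by
  induction y with
  | nil => rfl
  | cons b ys ih =>
    simp [editDist, levenshtein_nil_cons, Levenshtein.defaultCost] at ih ⊢
    omega

theorem editDist_nil_right (x : List Bool) : editDist x [] = x.length := by
  induction x with
  | nil => rfl
  | cons a xs ih =>
    simp [editDist, levenshtein_cons_nil, Levenshtein.defaultCost] at ih ⊢
    omega

theorem editDist_cons_cons (a b : Bool) (xs ys : List Bool) :
    editDist (a :: xs) (b :: ys) =
      min (editDist xs (b :: ys) + 1)
        (min (editDist (a :: xs) ys + 1) (editDist xs ys + if a = b then 0 else 1)) := by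
  simp only [editDist, levenshtein_cons_cons, Levenshtein.defaultCost, add_comm]

theorem exists_sublist_sublist_of_editDist (x y : List Bool) :
    ∃ z : List Bool, z.Sublist x ∧ z.Sublist y ∧
      x.length ≤ z.length + editDist x y ∧ y.length ≤ z.length + editDist x y := by
  induction x generalizing y with
  | nil => exact ⟨[], .slnil, List.nil_sublist _, by simp [editDist_nil_left]⟩
  | cons a xs ihx =>
    induction y with
    | nil => exact ⟨[], List.nil_sublist _, .slnil, by simp [editDist_nil_right]⟩
    | cons b ys ihy =>
      have hcases : editDist (a :: xs) (b :: ys) = editDist xs (b :: ys) + 1 ∨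
          editDist (a :: xs) (b :: ys) = editDist (a :: xs) ys + 1 ∨
          editDist (a :: xs) (b :: ys) = editDist xs ys + if a = b then 0 else 1 := by
        rw [editDist_cons_cons]
        rcases min_choice (editDist xs (b :: ys) + 1) (min (editDist (a :: xs) ys + 1)
          (editDist xs ys + if a = b then 0 else 1)) with h | h <;> rw [h]
        · exact .inl rfl
        · exact .inr (min_choice _ _)
      rcases hcases with h | h | h
      · obtain ⟨z, hzx, hzy, hx, hy⟩ := ihx (b :: ys)
        exact ⟨z, hzx.cons a, hzy, by simp; omega, by omega⟩
      · obtain ⟨z, hzx, hzy, hx, hy⟩ := ihy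
        exact ⟨z, hzx, hzy.cons b, by omega, by simp at hy ⊢; omega⟩
      · obtain ⟨z, hzx, hzy, hx, hy⟩ := ihx ys
        split_ifs at h with hab
        · subst hab
          exact ⟨a :: z, hzx.cons_cons a, hzy.cons_cons a, by simp; omega, by simp; omega⟩
        · exact ⟨z, hzx.cons a, hzy.cons b, by simp; omega, by simp; omega⟩

theorem List.exists_ofFn_map_eq {β γ : Type*} (g : β → γ) {m : ℕ} (xs : List γ)
    (hlen : xs.length = m) (h : ∀ a ∈ xs, a ∈ Set.range g) :
    ∃ f : Fin m → β, (List.ofFn f).map g = xs := by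
  obtain ⟨ys, rfl⟩ : xs ∈ Set.range (List.map g) := by rw [Set.range_list_map]; exact h
  subst hlen
  exact ⟨fun i => ys[i]'(by simpa using i.2), by simp⟩


section EditScripts

variable {α : Type*}

def eraseIdxs (x : List α) (is : List ℕ) : List α := is.foldl List.eraseIdx x

def insertIdxs (x : List α) (ps : List (ℕ × α)) : List α :=
  ps.foldl (fun w p => w.insertIdx p.1 p.2) x

theorem eraseIdxs_append (x : List α) (is js : List ℕ) :
    eraseIdxs x (is ++ js) = eraseIdxs (eraseIdxs x is) js :=
  List.foldl_append

theorem insertIdxs_append (x : List α) (ps qs : List (ℕ × α)) :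
    insertIdxs x (ps ++ qs) = insertIdxs (insertIdxs x ps) qs :=
  List.foldl_append

theorem eraseIdxs_cons_map_succ (a : α) (x : List α) (is : List ℕ) :
    eraseIdxs (a :: x) (is.map (· + 1)) = a :: eraseIdxs x is := by
  induction is generalizing x with
  | nil => rfl
  | cons i is ih => exact ih (x.eraseIdx i)

theorem insertIdxs_cons_map_succ (a : α) (x : List α) (ps : List (ℕ × α)) :
    insertIdxs (a :: x) (ps.map fun p => (p.1 + 1, p.2)) = a :: insertIdxs x ps := by
  induction ps generalizing x with
  | nil => rfl
  | cons p ps ih => exact ih (x.insertIdx p.1 p.2)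

theorem eraseIdxs_replicate_of_length_le {x : List α} {i : ℕ} (k : ℕ) (h : x.length ≤ i) :
    eraseIdxs x (List.replicate k i) = x := by
  induction k with
  | zero => rfl
  | succ k ih =>
    rw [List.replicate_succ, eraseIdxs, List.foldl_cons, List.eraseIdx_of_length_le h]
    exact ih

theorem insertIdxs_replicate_of_length_lt {x : List α} {i : ℕ} (a : α) (k : ℕ)
    (h : x.length < i) : insertIdxs x (List.replicate k (i, a)) = x := by
  induction k with
  | zero => rfl
  | succ k ih =>
    rw [List.replicate_succ, insertIdxs, List.foldl_cons, List.insertIdx_of_length_lt h]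
    exact ih

theorem List.Sublist.exists_eraseIdxs_eq {x z : List α} (h : z.Sublist x) :
    ∃ is : List ℕ, is.length + z.length = x.length ∧ (∀ i ∈ is, i < x.length) ∧
      eraseIdxs x is = z := by
  induction h with
  | slnil => exact ⟨[], rfl, by simp, rfl⟩
  | cons a _ ih =>
    obtain ⟨is, hlen, hlt, rfl⟩ := ih
    refine ⟨0 :: is, by simp; omega, ?_, rfl⟩
    simp only [List.mem_cons, List.length_cons, forall_eq_or_imp]
    exact ⟨by omega, fun i hi => (hlt i hi).trans (Nat.lt_succ_self _)⟩
  | cons_cons a _ ih =>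
    obtain ⟨is, hlen, hlt, rfl⟩ := ih
    exact ⟨is.map (· + 1), by simp; omega, by simpa using hlt, eraseIdxs_cons_map_succ a _ is⟩

theorem List.Sublist.exists_insertIdxs_eq {y z : List α} (h : z.Sublist y) :
    ∃ ps : List (ℕ × α), ps.length + z.length = y.length ∧
      (∀ p ∈ ps, p.1 < y.length) ∧ insertIdxs z ps = y := by
  induction h with
  | slnil => exact ⟨[], rfl, by simp, rfl⟩
  | cons b _ ih =>
    obtain ⟨ps, hlen, hlt, hins⟩ := ih
    refine ⟨ps ++ [(0, b)], by simp; omega, ?_, by rw [insertIdxs_append, hins]; rfl⟩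
    simp only [List.mem_append, List.mem_singleton, List.length_cons]
    rintro p (hp | rfl)
    · exact (hlt p hp).trans (Nat.lt_succ_self _)
    · exact Nat.succ_pos _
  | cons_cons b _ ih =>
    obtain ⟨ps, hlen, hlt, rfl⟩ := ih
    refine ⟨ps.map fun p => (p.1 + 1, p.2), by simp; omega, ?_, insertIdxs_cons_map_succ b _ ps⟩
    simp only [List.mem_map, List.length_cons]
    rintro _ ⟨p, hp, rfl⟩
    exact Nat.succ_lt_succ (hlt p hp)

theorem List.Sublist.exists_fin_eraseIdxs_eq {x z : List α} {k N : ℕ} (h : z.Sublist x)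
    (hk : x.length ≤ z.length + k) (hN : x.length < N) :
    ∃ d : Fin k → Fin N, eraseIdxs x ((List.ofFn d).map Fin.val) = z := by
  obtain ⟨is, hlen, hlt, hz⟩ := h.exists_eraseIdxs_eq
  obtain ⟨d, hd⟩ := List.exists_ofFn_map_eq (m := k) Fin.val
    (is ++ List.replicate (k - is.length) (N - 1)) (by simp; omega) (by
      simp only [List.mem_append, List.mem_replicate, Set.mem_range]
      rintro i (hi | ⟨-, rfl⟩)
      · exact ⟨⟨i, (hlt i hi).trans hN⟩, rfl⟩
      · exact ⟨⟨N - 1, by omega⟩, rfl⟩)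
  refine ⟨d, ?_⟩
  rw [hd, eraseIdxs_append, hz, eraseIdxs_replicate_of_length_le _ (by have := h.length_le; omega)]

theorem List.Sublist.exists_fin_insertIdxs_eq [Inhabited α] {y z : List α} {k N : ℕ}
    (h : z.Sublist y) (hk : y.length ≤ z.length + k) (hN : y.length < N) :
    ∃ p : Fin k → Fin (N + 1) × α,
      insertIdxs z ((List.ofFn p).map fun q => (q.1.val, q.2)) = y := by
  obtain ⟨ps, hlen, hlt, hy⟩ := h.exists_insertIdxs_eq
  obtain ⟨p, hp⟩ := List.exists_ofFn_map_eq (m := k)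
    (fun q : Fin (N + 1) × α => (q.1.val, q.2))
    (ps ++ List.replicate (k - ps.length) (N, default)) (by simp; omega) (by
      simp only [List.mem_append, List.mem_replicate, Set.mem_range]
      rintro q (hq | ⟨-, rfl⟩)
      · exact ⟨(⟨q.1, by have := hlt q hq; omega⟩, q.2), rfl⟩
      · exact ⟨(Fin.last N, default), rfl⟩)
  refine ⟨p, ?_⟩
  rw [hp, insertIdxs_append, hy, insertIdxs_replicate_of_length_lt _ _ hN]

/-- Out-of-range indices act as no-ops, so a script of length `k` also encodes every shorter one. -/
abbrev EditScript (α : Type*) (k N : ℕ) := (Fin k → Fin N) × (Fin k → Fin (N + 1) × α)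

def applyEditScript {k N : ℕ} (e : EditScript α k N) (x : List α) : List α :=
  insertIdxs (eraseIdxs x ((List.ofFn e.1).map Fin.val))
    ((List.ofFn e.2).map fun q => (q.1.val, q.2))

theorem exists_applyEditScript_eq [Inhabited α] {x y z : List α} {k N : ℕ}
    (hzx : z.Sublist x) (hzy : z.Sublist y) (hxk : x.length ≤ z.length + k)
    (hyk : y.length ≤ z.length + k) (hxN : x.length < N) (hyN : y.length < N) :
    ∃ e : EditScript α k N, applyEditScript e x = y := by
  obtain ⟨d, hd⟩ := hzx.exists_fin_eraseIdxs_eq hxk hxN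
  obtain ⟨p, hp⟩ := hzy.exists_fin_insertIdxs_eq hyk hyN
  exact ⟨(d, p), by rw [applyEditScript, hd, hp]⟩

theorem exists_ofFn_map_drop_take_eq {w : List α} {l : List (List α)} {m N : ℕ}
    (hl : l.length = m) (h : ∀ f ∈ l, f <:+: w) (hN : w.length < N) :
    ∃ g : Fin m → Fin N × Fin N, (List.ofFn g).map (fun p => (w.drop p.1).take p.2) = l := by
  refine List.exists_ofFn_map_eq _ l hl fun f hf => ?_
  obtain ⟨s, t, rfl⟩ := h f hf
  refine ⟨(⟨s.length, by simp at hN; omega⟩, ⟨f.length, by simp at hN; omega⟩), ?_⟩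
  simp

end EditScripts

/-- `(e₁, g, e₂)`: `e₁` turns `c` into the concatenation `w` of the fragments in one order,
`g` gives (start, length) in `w` of each fragment in the other order, and `e₂` turns their
concatenation into `c'`. -/
abbrev BreakEditCert (t te N : ℕ) :=
  EditScript Bool te N × (Fin (t + 1) → Fin N × Fin N) × EditScript Bool te N

def decodeCert {t te N : ℕ} (c : List Bool) (T : BreakEditCert t te N) : List Bool :=
  applyEditScript T.2.2
    ((List.ofFn T.2.1).map fun p => ((applyEditScript T.1 c).drop p.1).take p.2).flatten

theorem exists_decodeCert_eq {n t te : ℕ} {c c' : List Bool} (hc : c.length = n)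
    (hc' : c'.length = n) (h : ¬ Disjoint (BreakEdit t te c) (BreakEdit t te c')) :
    ∃ T : BreakEditCert t te (n + te + 1), decodeCert c T = c' := by
  obtain ⟨S, ⟨hcard, -, l, rfl, hl⟩, ⟨-, -, l', hl'S, hl'⟩⟩ := Set.not_disjoint_iff.mp h
  have hperm : l'.Perm l := Multiset.coe_eq_coe.mp hl'S
  obtain ⟨z, hzl, hzc, hlz, hcz⟩ := exists_sublist_sublist_of_editDist l.flatten c
  obtain ⟨z', hzl', hzc', hlz', hcz'⟩ := exists_sublist_sublist_of_editDist l'.flatten c'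
  have hlen : l'.flatten.length = l.flatten.length := by
    simp only [List.length_flatten, (hperm.map List.length).sum_eq]
  have hzn : z.length ≤ n := hc ▸ hzc.length_le
  obtain ⟨e₁, he₁⟩ := exists_applyEditScript_eq (k := te) (N := n + te + 1) hzc hzl
    (by omega) (by omega) (by omega) (by omega)
  obtain ⟨g, hg⟩ := exists_ofFn_map_drop_take_eq (w := l.flatten) (N := n + te + 1)
    (hperm.length_eq.trans (by simpa using hcard))
    (fun f hf => List.infix_of_mem_flatten (hperm.subset hf)) (by omega)
  obtain ⟨e₂, he₂⟩ := exists_applyEditScript_eq (k := te) (N := n + te + 1) hzl' hzc'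
    (by omega) (by omega) (by omega) (by omega)
  exact ⟨(e₁, g, e₂), by rw [decodeCert, he₁, hg, he₂]⟩

open Finset in
/-- Greedy independent sets: pick a vertex, discard it together with its neighbours, repeat. -/
theorem SimpleGraph.exists_isIndepSet_card_mul_ge {α : Type*} [DecidableEq α]
    (G : SimpleGraph α) [DecidableRel G.Adj] (D : ℕ) (Ω : Finset α)
    (hdeg : ∀ a ∈ Ω, #{b ∈ Ω | G.Adj a b} ≤ D) :
    ∃ C ⊆ Ω, G.IsIndepSet (C : Set α) ∧ #Ω ≤ #C * (D + 1) := by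
  induction Ω using Finset.strongInduction with
  | H Ω ih =>
    rcases Ω.eq_empty_or_nonempty with rfl | ⟨a, ha⟩
    · exact ⟨∅, empty_subset _, by simp, by simp⟩
    set F := insert a {b ∈ Ω | G.Adj a b}
    have hF : F ⊆ Ω := insert_subset ha (filter_subset _ _)
    obtain ⟨C, hC, hCind, hCcard⟩ := ih (Ω \ F) (sdiff_ssubset hF (by simp [F]))
      fun b hb => (card_le_card (filter_subset_filter _ sdiff_subset)).trans
        (hdeg b (sdiff_subset hb))
    have hfar : ∀ b ∈ C, b ≠ a ∧ ¬ G.Adj a b := fun b hb => by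
      have := (mem_sdiff.mp (hC hb)).2
      simp only [F, mem_insert, mem_filter, not_or, not_and] at this
      exact ⟨this.1, this.2 (mem_sdiff.mp (hC hb)).1⟩
    refine ⟨insert a C, insert_subset ha (hC.trans sdiff_subset), ?_, ?_⟩
    · rw [coe_insert, SimpleGraph.IsIndepSet, Set.pairwise_insert]
      exact ⟨hCind, fun b hb _ => ⟨(hfar b hb).2, fun h => (hfar b hb).2 h.symm⟩⟩
    · have haC : a ∉ C := fun h => (hfar a h).1 rfl
      have := card_sdiff_add_card_eq_card hF
      have : #F ≤ D + 1 := (card_insert_le _ _).trans (Nat.succ_le_succ (hdeg a ha))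
      rw [card_insert_of_notMem haC, add_one_mul]
      omega

def confusabilityGraph (t te : ℕ) : SimpleGraph (List Bool) :=
  SimpleGraph.fromRel fun c c' => ¬ Disjoint (BreakEdit t te c) (BreakEdit t te c')

theorem resilientBE_of_isIndepSet {t te : ℕ} {C : Finset (List Bool)}
    (h : (confusabilityGraph t te).IsIndepSet (C : Set (List Bool))) : ResilientBE t te C := by
  intro c hc c' hc' hne
  have := h hc hc' hne
  simp only [confusabilityGraph, SimpleGraph.fromRel_adj, not_and, not_or, not_not] at this
  exact Set.disjoint_iff_inter_eq_empty.mp (this hne).1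

open Finset in
theorem card_confusable_le (t te : ℕ) {n : ℕ} {Ω : Finset (List Bool)}
    (hΩ : ∀ c ∈ Ω, c.length = n) [DecidableRel (confusabilityGraph t te).Adj] {c : List Bool}
    (hc : c ∈ Ω) :
    #{c' ∈ Ω | (confusabilityGraph t te).Adj c c'} ≤
      Fintype.card (BreakEditCert t te (n + te + 1)) := by
  refine (card_le_card fun c' hc' => ?_).trans
    ((card_image_le (f := decodeCert c) (s := univ)).trans card_univ.le)
  rw [mem_filter] at hc'
  obtain ⟨-, hconf⟩ := hc'.2
  obtain ⟨T, hT⟩ := exists_decodeCert_eq (hΩ c hc) (hΩ c' hc'.1)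
    (by rcases hconf with h | h; exacts [h, fun hd => h hd.symm])
  exact mem_image.mpr ⟨T, mem_univ _, hT⟩

theorem card_breakEditCert_le (t te N : ℕ) :
    Fintype.card (BreakEditCert t te N) ≤ (N + 1) ^ (6 * te + 2 * (t + 1)) := by
  have hscript : Fintype.card (EditScript Bool te N) ≤ (N + 1) ^ (3 * te) := by
    simp only [Fintype.card_prod, Fintype.card_pi, Fintype.card_fin, Fintype.card_bool,
      Finset.prod_const, Finset.card_univ, ← mul_pow, pow_mul]
    gcongr
    ring_nf
    nlinarith
  have hcuts : Fintype.card (Fin (t + 1) → Fin N × Fin N) ≤ (N + 1) ^ (2 * (t + 1)) := by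
    simp only [Fintype.card_prod, Fintype.card_pi, Fintype.card_fin,
      Finset.prod_const, Finset.card_univ, pow_mul]
    gcongr
    nlinarith
  calc Fintype.card (BreakEditCert t te N)
      ≤ (N + 1) ^ (3 * te) * ((N + 1) ^ (2 * (t + 1)) * (N + 1) ^ (3 * te)) := by
        rw [Fintype.card_prod (EditScript Bool te N),
          Fintype.card_prod (Fin (t + 1) → Fin N × Fin N)]
        exact Nat.mul_le_mul hscript (Nat.mul_le_mul hcuts hscript)
    _ = (N + 1) ^ (6 * te + 2 * (t + 1)) := by ring

theorem exists_resilientBE_two_pow_le (n t te : ℕ) :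
    ∃ C : Finset (List Bool), (∀ c ∈ C, c.length = n) ∧ ResilientBE t te C ∧
      2 ^ n ≤ C.card * ((n + te + 2) ^ (6 * te + 2 * (t + 1)) + 1) := by
  classical
  let Ω : Finset (List Bool) := Finset.univ.map ⟨List.ofFn (n := n), List.ofFn_injective⟩
  have hΩ : ∀ c ∈ Ω, c.length = n := by simp [Ω]
  obtain ⟨C, hCΩ, hCind, hcard⟩ := (confusabilityGraph t te).exists_isIndepSet_card_mul_ge _ Ω
    fun c hc => (card_confusable_le t te hΩ hc).trans (card_breakEditCert_le _ _ _)
  refine ⟨C, fun c hc => hΩ c (hCΩ hc), resilientBE_of_isIndepSet hCind, ?_⟩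
  simpa [Ω] using hcard

theorem add_pow_add_one_le_pow {n t te : ℕ} (hn : 4 ≤ n) (hte : te ≤ n)
    (htte : 1 ≤ t + te) :
    (n + te + 2) ^ (6 * te + 2 * (t + 1)) + 1 ≤ n ^ (17 * (t + te)) := by
  set e := 6 * te + 2 * (t + 1)
  have hbase : n + te + 2 ≤ n ^ 2 := by nlinarith
  calc (n + te + 2) ^ e + 1 ≤ (n ^ 2) ^ e + (n ^ 2) ^ e := by
        gcongr
        exact Nat.one_le_pow _ _ (by positivity)
    _ ≤ n * n ^ (2 * e) := by rw [← pow_mul, ← two_mul]; gcongr; omega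
    _ = n ^ (2 * e + 1) := by ring
    _ ≤ n ^ (17 * (t + te)) := Nat.pow_le_pow_right (by omega) (by omega)

theorem sub_mul_logb_le_logb_of_two_pow_le {n m A : ℕ} (h : 2 ^ n ≤ A * n ^ m) :
    (n : ℝ) - m * Real.logb 2 n ≤ Real.logb 2 A := by
  have hpos : 0 < A * n ^ m := lt_of_lt_of_le (by positivity) h
  have hA : (A : ℝ) ≠ 0 := by exact_mod_cast (Nat.pos_of_mul_pos_right hpos).ne'
  have hnm : (n : ℝ) ^ m ≠ 0 := by exact_mod_cast (Nat.pos_of_mul_pos_left hpos).ne'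
  have := Real.logb_le_logb_of_le one_lt_two (by positivity) (show (2 : ℝ) ^ n ≤ A * n ^ m by
    exact_mod_cast h)
  rw [Real.logb_pow, Real.logb_self_eq_one one_lt_two, Real.logb_mul hA hnm, Real.logb_pow] at this
  linarith

theorem exists_resilient_code_redundancy_log_loglog :
    ∃ K₁ K₂ : ℝ, 0 < K₁ ∧ 0 < K₂ ∧
      ∀ n t te : ℕ, 4 ≤ n → 1 ≤ t + te →
        K₁ * ((t + te : ℕ) : ℝ) * Real.logb 2 n * Real.logb 2 (Real.logb 2 n) ≤ (n : ℝ) →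
        ∃ C : Finset (List Bool),
          (∀ c ∈ C, c.length = n) ∧ ResilientBE t te C ∧
          (n : ℝ) - K₂ * ((t + te : ℕ) : ℝ) * Real.logb 2 n * Real.logb 2 (Real.logb 2 n)
            ≤ Real.logb 2 (C.card : ℝ) := by
  refine ⟨1, 17, one_pos, by norm_num, fun n t te hn htte hK => ?_⟩
  have hlog : 2 ≤ Real.logb 2 n := by
    rw [Real.le_logb_iff_rpow_le one_lt_two (by positivity)]
    exact_mod_cast (show 2 ^ 2 ≤ n by omega)
  have hloglog : 1 ≤ Real.logb 2 (Real.logb 2 n) := by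
    rw [Real.le_logb_iff_rpow_le one_lt_two (by positivity)]
    simpa using hlog
  set X : ℝ := ((t + te : ℕ) : ℝ)
  have hXL : X ≤ X * Real.logb 2 n := le_mul_of_one_le_right (by positivity) (by linarith)
  have hXLM : X * Real.logb 2 n ≤ X * Real.logb 2 n * Real.logb 2 (Real.logb 2 n) :=
    le_mul_of_one_le_right (by positivity) hloglog
  have hte : te ≤ n := by
    have : ((t + te : ℕ) : ℝ) ≤ n := by linarith
    exact (Nat.le_add_left te t).trans (by exact_mod_cast this)
  obtain ⟨C, hlen, hres, hcard⟩ := exists_resilientBE_two_pow_le n t te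
  refine ⟨C, hlen, hres, ?_⟩
  have := sub_mul_logb_le_logb_of_two_pow_le
    (hcard.trans (Nat.mul_le_mul_left _ (add_pow_add_one_le_pow hn hte htte)))
  push_cast [X] at this hXLM ⊢
  linarith
end

section
/- There exist absolute constants K₁, K₂ > 0 such that for all natural numbers n, t with n ≥ 4, t ≥ 1, and K₁·t·log₂(n)·log₂(log₂ n) ≤ n, there exists a t-breaks resilient code C ⊆ {0,1}^n with log₂|C| ≥ n − K₂·t·log₂(n)·log₂(log₂ n); i.e., there exists such a code of redundancy O(t·log n·log log n). -/
/-- The error-free `t`-breaks channel output set of a binary word `w`: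
multisets of `t+1` nonempty binary words, some ordering of which concatenates to `w`. -/
def Break (t : ℕ) (w : List Bool) : Set (Multiset (List Bool)) :=
  { S | Multiset.card S = t + 1 ∧ (∀ f ∈ S, f ≠ []) ∧
      ∃ l : List (List Bool), (l : Multiset (List Bool)) = S ∧ l.flatten = w }

/-- A code is `t`-breaks resilient if the channel output sets of distinct codewords
are disjoint. -/
def ResilientB (t : ℕ) (C : Finset (List Bool)) : Prop :=
  ∀ c ∈ C, ∀ c' ∈ C, c ≠ c' → Break t c ∩ Break t c' = ∅

/-! Any word confusable with `w` through the `t`-breaks channel is a concatenation of `t + 1`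
infixes of `w`, and a word of length `n` has at most `(n + 1)²` infixes. So every word of length
`n` is confusable with at most `(n + 1) ^ (2 (t + 1))` words (itself included), and a maximum set of
pairwise non-confusable words, being dominating, has at least `2 ^ n / (n + 1) ^ (2 (t + 1))`
elements: redundancy `O(t log n)`, which is within `O(t log n log log n)`. -/

open Finset

theorem Finset.exists_pairwise_not_card_le_mul {α : Type*} [DecidableEq α]
    {R : α → α → Prop} [DecidableRel R] (hR : ∀ a b, R a b → R b a) {A : Finset α} {N : ℕ}
    (hN : ∀ a ∈ A, #{b ∈ A | b = a ∨ R a b} ≤ N) :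
    ∃ C ⊆ A, (C : Set α).Pairwise (fun a b => ¬R a b) ∧ #A ≤ N * #C := by
  classical
  obtain ⟨C, hC, hmax⟩ := exists_max_image
    (A.powerset.filter fun C : Finset α => (C : Set α).Pairwise fun a b => ¬R a b) card
    ⟨∅, by simp⟩
  rw [mem_filter, mem_powerset] at hC
  refine ⟨C, hC.1, hC.2, ?_⟩
  -- an independent set of maximum size is dominating
  have hcover : A ⊆ C.biUnion fun c => {b ∈ A | b = c ∨ R c b} := by
    intro a ha
    rw [mem_biUnion]
    by_cases haC : a ∈ C
    · exact ⟨a, haC, mem_filter.2 ⟨ha, .inl rfl⟩⟩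
    have hins : ¬((insert a C : Finset α) : Set α).Pairwise fun a b => ¬R a b := fun h => by
      have := hmax (insert a C) (mem_filter.2 ⟨mem_powerset.2 (insert_subset ha hC.1), h⟩)
      rw [card_insert_of_notMem haC] at this
      omega
    rw [coe_insert, Set.pairwise_insert_of_notMem (by simpa using haC)] at hins
    obtain ⟨c, hc, hac⟩ : ∃ c ∈ C, R a c ∨ R c a := by
      by_contra! h
      exact hins ⟨hC.2, h⟩
    exact ⟨c, hc, mem_filter.2 ⟨ha, .inr (hac.elim (hR _ _) id)⟩⟩
  calc #A ≤ #(C.biUnion fun c => {b ∈ A | b = c ∨ R c b}) := card_le_card hcover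
    _ ≤ #C * N := card_biUnion_le_card_mul _ _ _ fun c hc => hN c (hC.1 hc)
    _ = N * #C := mul_comm _ _

theorem exists_finset_infix_card_le {α : Type*} [DecidableEq α] (w : List α) :
    ∃ I : Finset (List α), (∀ u, u <:+: w → u ∈ I) ∧ #I ≤ (w.length + 1) ^ 2 := by
  refine ⟨(range (w.length + 1) ×ˢ range (w.length + 1)).image
    fun p => (w.drop p.1).take p.2, ?_, ?_⟩
  · rintro u ⟨s, r, rfl⟩
    refine mem_image.2 ⟨(s.length, u.length), ?_, by simp⟩
    simp only [mem_product, mem_range, List.length_append]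
    omega
  · calc _ ≤ #(range (w.length + 1) ×ˢ range (w.length + 1)) := card_image_le
      _ = (w.length + 1) ^ 2 := by rw [card_product, card_range, sq]

theorem card_le_of_forall_flatten_infix {α : Type*} [DecidableEq α] {w : List α} {k : ℕ}
    {A : Finset (List α)}
    (hA : ∀ w' ∈ A, ∃ f : Fin k → List α, (∀ i, f i <:+: w) ∧ (List.ofFn f).flatten = w') :
    #A ≤ (w.length + 1) ^ (2 * k) := by
  obtain ⟨I, hI, hIcard⟩ := exists_finset_infix_card_le w
  calc _ ≤ #((Fintype.piFinset fun _ : Fin k => I).image fun f => (List.ofFn f).flatten) := by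
        refine card_le_card fun w' hw' => ?_
        obtain ⟨f, hf, rfl⟩ := hA w' hw'
        exact mem_image.2 ⟨f, Fintype.mem_piFinset.2 fun i => hI _ (hf i), rfl⟩
    _ ≤ #I ^ k := card_image_le.trans (by simp)
    _ ≤ ((w.length + 1) ^ 2) ^ k := Nat.pow_le_pow_left hIcard k
    _ = (w.length + 1) ^ (2 * k) := (pow_mul _ _ _).symm

theorem exists_ofFn_infix_of_break_inter_nonempty {t : ℕ} {w w' : List Bool}
    (h : w' = w ∨ (Break t w ∩ Break t w').Nonempty) :
    ∃ f : Fin (t + 1) → List Bool, (∀ i, f i <:+: w) ∧ (List.ofFn f).flatten = w' := by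
  rcases h with rfl | ⟨S, ⟨hcard, -, l, rfl, rfl⟩, -, -, l', hl', rfl⟩
  · -- pad `w'` with empty infixes
    exact ⟨Fin.cons w' fun _ => [], Fin.cases (List.infix_refl _) fun _ => List.nil_infix,
      by simp [List.ofFn_succ]⟩
  · have hperm : l'.Perm l := Multiset.coe_eq_coe.1 hl'
    have hlen : l'.length = t + 1 := by rw [hperm.length_eq, ← Multiset.coe_card, hcard]
    refine ⟨fun i => l'.get (i.cast hlen.symm), fun i => ?_, ?_⟩
    · exact List.infix_of_mem_flatten (hperm.mem_iff.1 (List.get_mem _ _))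
    · exact congrArg List.flatten <| List.ext_getElem (by simp [hlen]) fun _ _ _ => by
        rw [List.getElem_ofFn]; rfl

theorem exists_resilientB_two_pow_le (t n : ℕ) :
    ∃ C : Finset (List Bool), (∀ c ∈ C, c.length = n) ∧ ResilientB t C ∧
      2 ^ n ≤ (n + 1) ^ (2 * (t + 1)) * #C := by
  classical
  set A : Finset (List Bool) := univ.image fun f : Fin n → Bool => List.ofFn f
  have hA : ∀ c ∈ A, c.length = n := by simp [A]
  have hAcard : #A = 2 ^ n := by
    rw [card_image_of_injective _ fun _ _ => List.ofFn_inj.1, card_univ, Fintype.card_fun,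
      Fintype.card_bool, Fintype.card_fin]
  obtain ⟨C, hCA, hC, hcard⟩ := exists_pairwise_not_card_le_mul
    (R := fun w w' => (Break t w ∩ Break t w').Nonempty) (fun _ _ ⟨S, h, h'⟩ => ⟨S, h', h⟩)
    (A := A) (N := (n + 1) ^ (2 * (t + 1))) fun w hw => hA w hw ▸
      card_le_of_forall_flatten_infix fun w' hw' =>
        exists_ofFn_infix_of_break_inter_nonempty (mem_filter.1 hw').2
  exact ⟨C, fun c hc => hA c (hCA hc),
    fun c hc c' hc' hne => Set.not_nonempty_iff_eq_empty.1 (hC hc hc' hne), hAcard ▸ hcard⟩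

open Real in
theorem two_mul_succ_mul_logb_succ_le {n t : ℕ} (hn : 4 ≤ n) (ht : 1 ≤ t) :
    2 * (t + 1) * logb 2 (n + 1) ≤ 8 * t * logb 2 n * logb 2 (logb 2 n) := by
  have hn' : (4 : ℝ) ≤ n := by exact_mod_cast hn
  have ht' : (1 : ℝ) ≤ t := by exact_mod_cast ht
  have hlog : 2 ≤ logb 2 n := by
    rw [le_logb_iff_rpow_le one_lt_two (by positivity)]
    norm_num
    exact hn
  have hloglog : 1 ≤ logb 2 (logb 2 n) := by
    rw [le_logb_iff_rpow_le one_lt_two (by positivity)]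
    simpa using hlog
  have hsucc : logb 2 (n + 1) ≤ 2 * logb 2 n :=
    calc logb 2 (n + 1) ≤ logb 2 ((n : ℝ) ^ 2) :=
          logb_le_logb_of_le one_lt_two (by positivity) (by nlinarith)
      _ = 2 * logb 2 n := by rw [logb_pow]; norm_num
  have hsucc_nonneg : 0 ≤ logb 2 (n + 1) := logb_nonneg one_lt_two (by linarith)
  calc 2 * (t + 1) * logb 2 (n + 1) ≤ 4 * t * (2 * logb 2 n) :=
        mul_le_mul (by linarith) hsucc hsucc_nonneg (by positivity)
    _ = 8 * t * logb 2 n * 1 := by ring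
    _ ≤ 8 * t * logb 2 n * logb 2 (logb 2 n) := by gcongr

theorem exists_breaks_resilient_code_redundancy_log_loglog :
    ∃ K₁ K₂ : ℝ, 0 < K₁ ∧ 0 < K₂ ∧
      ∀ n t : ℕ, 4 ≤ n → 1 ≤ t →
        K₁ * (t : ℝ) * Real.logb 2 n * Real.logb 2 (Real.logb 2 n) ≤ (n : ℝ) →
        ∃ C : Finset (List Bool),
          (∀ c ∈ C, c.length = n) ∧ ResilientB t C ∧
          (n : ℝ) - K₂ * (t : ℝ) * Real.logb 2 n * Real.logb 2 (Real.logb 2 n)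
            ≤ Real.logb 2 (C.card : ℝ) := by
  refine ⟨1, 8, one_pos, by norm_num, fun n t hn ht _ => ?_⟩
  obtain ⟨C, hlen, hres, hcard⟩ := exists_resilientB_two_pow_le t n
  refine ⟨C, hlen, hres, ?_⟩
  have hC : (0 : ℝ) < #C := by
    have : 0 < #C := Nat.pos_of_ne_zero fun h => by simp [h] at hcard
    exact_mod_cast this
  have hcard' : (2 : ℝ) ^ n ≤ ((n : ℝ) + 1) ^ (2 * (t + 1)) * #C := by exact_mod_cast hcard
  have hlog : (n : ℝ) ≤ 2 * (t + 1) * Real.logb 2 (n + 1) + Real.logb 2 #C := by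
    have := Real.logb_le_logb_of_le one_lt_two (by positivity) hcard'
    rw [Real.logb_mul (by positivity) hC.ne', Real.logb_pow, Real.logb_pow,
      Real.logb_self_eq_one one_lt_two, mul_one] at this
    exact_mod_cast this
  linarith [two_mul_succ_mul_logb_succ_le hn ht]
end

section
/- For natural numbers ℓ₁, ℓ₂ with ℓ₁ > ℓ₂, the code C_MU(ℓ₁, ℓ₂) = { 0^{ℓ₁} · 1 · w · 1 : w ∈ {0,1}^{ℓ₂} }, all of whose codewords have length ℓ₁ + ℓ₂ + 2 (where 0^{ℓ₁} denotes a run of ℓ₁ zeros and · denotes concatenation), is a mutually uncorrelated code. -/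
/-!
Every codeword starts with the run `0^ℓ₁ 1` and ends with `1`. A prefix of length `k ≤ ℓ₁` is
all zeros, while every nonempty suffix contains the final `1`. A prefix of length `k > ℓ₁` has
its first `1` at position `ℓ₁`, while the suffix of the same length starts inside the leading
zero run (because `L = ℓ₁ + ℓ₂ + 2 ≤ 2ℓ₁ + 1`) and so has its first `1` strictly earlier.
-/

/-- A code `C` of constant codeword length `L` is mutually uncorrelated if for every
pair of (possibly equal) codewords `a, b ∈ C` and every `k` with `1 ≤ k < L`, the
length-`k` prefix of `a` differs from the length-`k` suffix of `b`. -/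
def MutuallyUncorrelated (C : Set (List Bool)) (L : ℕ) : Prop :=
  ∀ a ∈ C, ∀ b ∈ C, ∀ k : ℕ, 1 ≤ k → k < L → a.take k ≠ b.drop (L - k)

namespace List

variable {α : Type*}

theorem take_replicate_append_of_le {k m : ℕ} (a : α) (l : List α) (hk : k ≤ m) :
    (replicate m a ++ l).take k = replicate k a := by
  rw [take_append_of_le_length (by simpa using hk), take_replicate, min_eq_left hk]

theorem mem_drop_append_singleton {j : ℕ} (a : α) {l : List α} (hj : j ≤ l.length) :
    a ∈ (l ++ [a]).drop j := by
  simp [drop_append_of_le_length hj]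

theorem replicate_append_ne_replicate_append_cons {a b : α} (hab : a ≠ b) :
    ∀ {m n : ℕ} (l l' : List α), n < m → replicate m a ++ l ≠ replicate n a ++ b :: l'
  | m + 1, 0, _, _, _ => by simp [replicate_succ, hab]
  | m + 1, n + 1, l, l', hnm => by
    simpa [replicate_succ] using
      replicate_append_ne_replicate_append_cons hab l l' (Nat.lt_of_succ_lt_succ hnm)

end List

open List

theorem mutuallyUncorrelated_of_zeroRun_prefix {C : Set (List Bool)} {m L : ℕ}
    (hL : L ≤ 2 * m + 1) (hlen : ∀ c ∈ C, c.length = L)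
    (hprefix : ∀ c ∈ C, ∃ u, c = replicate m false ++ true :: u)
    (hsuffix : ∀ c ∈ C, ∃ v, c = v ++ [true]) :
    MutuallyUncorrelated C L := by
  intro a ha b hb k hk1 hkL heq
  obtain ⟨u, rfl⟩ := hprefix a ha
  by_cases hkm : k ≤ m
  · obtain ⟨v, rfl⟩ := hsuffix b hb
    have hv : v.length + 1 = L := by simpa using hlen _ hb
    have htrue : true ∈ (v ++ [true]).drop (L - k) := mem_drop_append_singleton true (by omega)
    rw [← heq, take_replicate_append_of_le false _ hkm] at htrue
    simp at htrue
  · obtain ⟨u', rfl⟩ := hprefix b hb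
    have hprefix_a : (replicate m false ++ true :: u).take k
        = replicate m false ++ (true :: u).take (k - m) := by
      rw [take_append, take_replicate, length_replicate, min_eq_right (by omega)]
    have hsuffix_b : (replicate m false ++ true :: u').drop (L - k)
        = replicate (m - (L - k)) false ++ true :: u' := by
      rw [drop_append_of_le_length (by rw [length_replicate]; omega), drop_replicate]
    rw [hprefix_a, hsuffix_b] at heq
    exact replicate_append_ne_replicate_append_cons Bool.false_ne_true _ _ (by omega) heq

theorem zeroRun_code_mutually_uncorrelated (ℓ₁ ℓ₂ : ℕ) (h : ℓ₂ < ℓ₁) :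
    (∀ c ∈ { c : List Bool | ∃ w : List Bool, w.length = ℓ₂ ∧
        c = List.replicate ℓ₁ false ++ [true] ++ w ++ [true] },
      c.length = ℓ₁ + ℓ₂ + 2) ∧
    MutuallyUncorrelated
      { c : List Bool | ∃ w : List Bool, w.length = ℓ₂ ∧
        c = List.replicate ℓ₁ false ++ [true] ++ w ++ [true] }
      (ℓ₁ + ℓ₂ + 2) := by
  have hlen : ∀ c ∈ { c : List Bool | ∃ w : List Bool, w.length = ℓ₂ ∧
      c = List.replicate ℓ₁ false ++ [true] ++ w ++ [true] }, c.length = ℓ₁ + ℓ₂ + 2 := by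
    rintro c ⟨w, hw, rfl⟩
    simp only [length_append, length_replicate, length_singleton, hw]
    omega
  refine ⟨hlen, mutuallyUncorrelated_of_zeroRun_prefix (m := ℓ₁) (by omega) hlen ?_ ?_⟩
  · rintro c ⟨w, -, rfl⟩
    exact ⟨w ++ [true], by simp⟩
  · rintro c ⟨w, -, rfl⟩
    exact ⟨_, rfl⟩
end
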